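/- arXiv:1908.08832 — 7 statements merged into one kernel-verified Lean document; each statement's English description precedes it below -/
import Mathlib

section
/- Let V be a real vector space and let J be a metallic structure on V with parameters p, q ∈ ℝ such that p² + 4q ≠ 0. Define J̃ := (-1/√|p² + 4q|)•(2•J - p•id_V). Then J̃ ∘ J̃ = ((p² + 4q)/|p² + 4q|)•id_V; in particular J̃ ∘ J̃ = id_V when p² + 4q > 0 and J̃ ∘ J̃ = -id_V when p² + 4q < 0. -/
/-!
Completing the square: `J² = pJ + q` gives `(2J - p)² = 4J² - 4pJ + p² = p² + 4q`, so rescaling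
`2J - p` by `-1/√|p² + 4q|` normalises its square to `(p² + 4q)/|p² + 4q| = ±1`.
-/

theorem two_smul_sub_mul_self_of_mul_self_eq {R A : Type*} [CommRing R] [Ring A] [Algebra R A]
    {p q : R} {J : A} (hJ : J * J = p • J + q • 1) :
    ((2 : R) • J - p • 1) * ((2 : R) • J - p • 1) = (p ^ 2 + 4 * q) • (1 : A) := by
  simp only [sub_mul, mul_sub, smul_mul_smul_comm, mul_one, one_mul, hJ]
  module

theorem sq_neg_one_div_sqrt_abs_mul (x : ℝ) : (-1 / √|x|) ^ 2 * x = x / |x| := by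
  rw [div_pow, neg_one_sq, Real.sq_sqrt (abs_nonneg x), one_div_mul_eq_div]

theorem neg_one_div_sqrt_abs_smul_mul_self {A : Type*} [Ring A] [Algebra ℝ A] {p q : ℝ} {J : A}
    (hJ : J * J = p • J + q • 1) :
    ((-1 / √|p ^ 2 + 4 * q|) • ((2 : ℝ) • J - p • 1)) *
        ((-1 / √|p ^ 2 + 4 * q|) • ((2 : ℝ) • J - p • 1)) =
      ((p ^ 2 + 4 * q) / |p ^ 2 + 4 * q|) • (1 : A) := by
  rw [smul_mul_smul_comm, two_smul_sub_mul_self_of_mul_self_eq hJ, smul_smul, ← sq,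
    sq_neg_one_div_sqrt_abs_mul]

theorem div_abs_of_pos {x : ℝ} (hx : 0 < x) : x / |x| = 1 := by
  rw [abs_of_pos hx, div_self hx.ne']

theorem div_abs_of_neg {x : ℝ} (hx : x < 0) : x / |x| = -1 := by
  rw [abs_of_neg hx, div_neg, div_self hx.ne]

theorem metallic_tilde_J_squared_general
    (V : Type*) [AddCommGroup V] [Module ℝ V]
    (p q : ℝ) (J : V →ₗ[ℝ] V)
    (hJ : J ∘ₗ J = p • J + q • (LinearMap.id : V →ₗ[ℝ] V))
    (Jt : V →ₗ[ℝ] V)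
    (hJt : Jt = (-1 / Real.sqrt |p ^ 2 + 4 * q|) •
        ((2 : ℝ) • J - p • (LinearMap.id : V →ₗ[ℝ] V))) :
    Jt ∘ₗ Jt = ((p ^ 2 + 4 * q) / |p ^ 2 + 4 * q|) • (LinearMap.id : V →ₗ[ℝ] V) ∧
      (0 < p ^ 2 + 4 * q → Jt ∘ₗ Jt = LinearMap.id) ∧
      (p ^ 2 + 4 * q < 0 → Jt ∘ₗ Jt = -LinearMap.id) := by
  have hsq : Jt ∘ₗ Jt = ((p ^ 2 + 4 * q) / |p ^ 2 + 4 * q|) • (LinearMap.id : V →ₗ[ℝ] V) := by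
    rw [← Module.End.mul_eq_comp, ← Module.End.one_eq_id] at hJ ⊢
    rw [hJt, ← Module.End.one_eq_id]
    exact neg_one_div_sqrt_abs_smul_mul_self hJ
  refine ⟨hsq, fun hpos => ?_, fun hneg => ?_⟩
  · rw [hsq, div_abs_of_pos hpos, one_smul]
  · rw [hsq, div_abs_of_neg hneg, neg_one_smul]

/-- Let `V` be a real vector space and let `J` be a metallic structure on `V`
with parameters `p, q ∈ ℝ` (i.e. `J ∘ J = p • J + q • id`) such that `p² + 4q ≠ 0`.
Define `J̃ := (-1/√|p² + 4q|) • (2 • J - p • id)`.  Then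
`J̃ ∘ J̃ = ((p² + 4q)/|p² + 4q|) • id`; in particular `J̃ ∘ J̃ = id` when `p² + 4q > 0`
and `J̃ ∘ J̃ = -id` when `p² + 4q < 0`. -/
theorem metallic_tilde_J_squared
    (V : Type*) [AddCommGroup V] [Module ℝ V]
    (p q : ℝ) (J : V →ₗ[ℝ] V)
    (hJ : J ∘ₗ J = p • J + q • (LinearMap.id : V →ₗ[ℝ] V))
    (h : p ^ 2 + 4 * q ≠ 0)
    (Jt : V →ₗ[ℝ] V)
    (hJt : Jt = (-1 / Real.sqrt |p ^ 2 + 4 * q|) •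
        ((2 : ℝ) • J - p • (LinearMap.id : V →ₗ[ℝ] V))) :
    Jt ∘ₗ Jt = ((p ^ 2 + 4 * q) / |p ^ 2 + 4 * q|) • (LinearMap.id : V →ₗ[ℝ] V) ∧
      (0 < p ^ 2 + 4 * q → Jt ∘ₗ Jt = LinearMap.id) ∧
      (p ^ 2 + 4 * q < 0 → Jt ∘ₗ Jt = -LinearMap.id) :=
  metallic_tilde_J_squared_general V p q J hJ Jt hJt
end

section
/- Let V be a real vector space equipped with a nondegenerate symmetric bilinear form B, and let J be a metallic structure on V with parameters p, q ∈ ℝ that is B-symmetric. Assume p² + 4q > 0. Then the associated endomorphism J_p := (1/√(p² + 4q))•(2•J - p•id_V) is an almost product structure compatible with B, i.e. J_p ∘ J_p = id_V and B(J_p X, Y) = B(X, J_p Y) for all X, Y ∈ V. -/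
/-- Let `V` be a real vector space with a nondegenerate symmetric bilinear
form `B`, and let `J` be a `B`-symmetric metallic structure on `V` with parameters `p, q`
(i.e. `J ∘ J = p • J + q • id`).  Assume `p² + 4q > 0`.  Then the associated endomorphism
`J_p := (1/√(p² + 4q)) • (2 • J - p • id)` is an almost product structure compatible with `B`:
`J_p ∘ J_p = id` and `B (J_p X) Y = B X (J_p Y)` for all `X, Y`. -/
theorem metallic_associated_almost_product_structure
    (V : Type*) [AddCommGroup V] [Module ℝ V]
    (B : LinearMap.BilinForm ℝ V)
    (hBsymm : ∀ X Y : V, B X Y = B Y X)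
    (hBnondeg : ∀ ξ : V, (∀ X : V, B X ξ = 0) → ξ = 0)
    (p q : ℝ) (J : V →ₗ[ℝ] V)
    (hJ : J ∘ₗ J = p • J + q • (LinearMap.id : V →ₗ[ℝ] V))
    (hJsymm : ∀ X Y : V, B (J X) Y = B X (J Y))
    (h : 0 < p ^ 2 + 4 * q)
    (Jp : V →ₗ[ℝ] V)
    (hJp : Jp = (1 / Real.sqrt (p ^ 2 + 4 * q)) •
        ((2 : ℝ) • J - p • (LinearMap.id : V →ₗ[ℝ] V))) :
    Jp ∘ₗ Jp = LinearMap.id ∧ ∀ X Y : V, B (Jp X) Y = B X (Jp Y) := by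
  have hs : Real.sqrt (p ^ 2 + 4 * q) ^ 2 = p ^ 2 + 4 * q := Real.sq_sqrt h.le
  have hs0 : Real.sqrt (p ^ 2 + 4 * q) ≠ 0 := by positivity
  have hJJ : ∀ X : V, J (J X) = p • J X + q • X := fun X =>
    congrFun (congrArg DFunLike.coe hJ) X
  constructor
  · ext X
    simp only [hJp, LinearMap.comp_apply, LinearMap.smul_apply, LinearMap.sub_apply,
      LinearMap.id_apply, map_smul, map_sub, hJJ, LinearMap.id_coe, id_eq]
    match_scalars <;> field_simp <;> nlinarith [hs, Real.sqrt_nonneg (p ^ 2 + 4 * q)]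
  · intro X Y
    simp only [hJp, LinearMap.smul_apply, LinearMap.sub_apply, LinearMap.id_apply,
      map_smul, map_sub, LinearMap.smul_apply, smul_eq_mul, LinearMap.map_smul₂,
      LinearMap.map_sub₂, hJsymm]
end

section
/- Let V be a real vector space equipped with a nondegenerate symmetric bilinear form B, and let J be a metallic structure on V with parameters p, q ∈ ℝ that is B-symmetric. Assume p² + 4q < 0. Then the associated endomorphism J_c := (1/√(-(p² + 4q)))•(2•J - p•id_V) is a Norden structure, i.e. J_c ∘ J_c = -id_V and B(J_c X, Y) = B(X, J_c Y) for all X, Y ∈ V. -/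
/-- Let `V` be a real vector space with a nondegenerate symmetric bilinear
form `B`, and let `J` be a `B`-symmetric metallic structure on `V` with parameters `p, q`
(i.e. `J ∘ J = p • J + q • id`).  Assume `p² + 4q < 0`.  Then the associated endomorphism
`J_c := (1/√(-(p² + 4q))) • (2 • J - p • id)` is a Norden structure:
`J_c ∘ J_c = -id` and `B (J_c X) Y = B X (J_c Y)` for all `X, Y`. -/
theorem metallic_associated_Norden_structure
    (V : Type*) [AddCommGroup V] [Module ℝ V]
    (B : LinearMap.BilinForm ℝ V)
    (hBsymm : ∀ X Y : V, B X Y = B Y X)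
    (hBnondeg : ∀ ξ : V, (∀ X : V, B X ξ = 0) → ξ = 0)
    (p q : ℝ) (J : V →ₗ[ℝ] V)
    (hJ : J ∘ₗ J = p • J + q • (LinearMap.id : V →ₗ[ℝ] V))
    (hJsymm : ∀ X Y : V, B (J X) Y = B X (J Y))
    (h : p ^ 2 + 4 * q < 0)
    (Jc : V →ₗ[ℝ] V)
    (hJc : Jc = (1 / Real.sqrt (-(p ^ 2 + 4 * q))) •
        ((2 : ℝ) • J - p • (LinearMap.id : V →ₗ[ℝ] V))) :
    Jc ∘ₗ Jc = -LinearMap.id ∧ ∀ X Y : V, B (Jc X) Y = B X (Jc Y) := by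
  have hpos : 0 < -(p ^ 2 + 4 * q) := by linarith
  have hs2 : Real.sqrt (-(p ^ 2 + 4 * q)) ^ 2 = -(p ^ 2 + 4 * q) :=
    Real.sq_sqrt hpos.le
  have hsne : Real.sqrt (-(p ^ 2 + 4 * q)) ≠ 0 :=
    ne_of_gt (Real.sqrt_pos.mpr hpos)
  constructor
  · ext X
    have hJX : J (J X) = p • J X + q • X := by
      have := congrArg (fun f => f X) hJ
      simpa using this
    simp only [hJc, LinearMap.comp_apply, LinearMap.smul_apply, LinearMap.sub_apply,
      LinearMap.id_apply, LinearMap.neg_apply, map_smul, map_sub, smul_sub, smul_smul,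
      hJX]
    have hm : Real.sqrt (-(4 * q) + -p ^ 2) * Real.sqrt (-(4 * q) + -p ^ 2)
        = -(4 * q) + -p ^ 2 := Real.mul_self_sqrt (by linarith)
    have hne : Real.sqrt (-(4 * q) + -p ^ 2) ≠ 0 :=
      ne_of_gt (Real.sqrt_pos.mpr (by linarith))
    match_scalars <;>
      · field_simp
        nlinarith [hm]
  · intro X Y
    simp only [hJc, LinearMap.smul_apply, LinearMap.sub_apply, LinearMap.id_apply,
      map_smul, map_sub, LinearMap.smul_apply, LinearMap.sub_apply, LinearMap.map_smul₂,
      LinearMap.map_sub₂, hJsymm, LinearMap.map_smul, LinearMap.map_sub, smul_eq_mul]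
end

section
/- Let V and W be real inner product spaces, let J be a metallic structure on V with parameters p, q ∈ ℝ symmetric with respect to the inner product of V, and let J̄ be a metallic structure on W with parameters p̄, q̄ ∈ ℝ symmetric with respect to the inner product of W. Let Φ : V → W be a surjective linear isometry satisfying Φ ∘ J = J̄ ∘ Φ. Then (p - p̄)•J = (q̄ - q)•id_V and (p - p̄)•J̄ = (q̄ - q)•id_W. -/
open RealInnerProductSpace

/-- Let `V`, `W` be real inner product spaces, `J` a metallic structure on
`V` with parameters `p, q` symmetric w.r.t. the inner product of `V`, and `J̄` a metallic
structure on `W` with parameters `p̄, q̄` symmetric w.r.t. the inner product of `W`.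
Let `Φ : V → W` be a surjective linear isometry with `Φ ∘ J = J̄ ∘ Φ`.
Then `(p - p̄) • J = (q̄ - q) • id_V` and `(p - p̄) • J̄ = (q̄ - q) • id_W`. -/
theorem metallic_isometry_parameters
    (V W : Type*) [NormedAddCommGroup V] [InnerProductSpace ℝ V]
    [NormedAddCommGroup W] [InnerProductSpace ℝ W]
    (p q : ℝ) (J : V →ₗ[ℝ] V)
    (hJ : J ∘ₗ J = p • J + q • (LinearMap.id : V →ₗ[ℝ] V))
    (hJsymm : ∀ X Y : V, ⟪J X, Y⟫ = ⟪X, J Y⟫)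
    (p' q' : ℝ) (J' : W →ₗ[ℝ] W)
    (hJ' : J' ∘ₗ J' = p' • J' + q' • (LinearMap.id : W →ₗ[ℝ] W))
    (hJ'symm : ∀ X Y : W, ⟪J' X, Y⟫ = ⟪X, J' Y⟫)
    (Φ : V →ₗᵢ[ℝ] W) (hΦsurj : Function.Surjective Φ)
    (hΦJ : ∀ X : V, Φ (J X) = J' (Φ X)) :
    (p - p') • J = (q' - q) • (LinearMap.id : V →ₗ[ℝ] V) ∧
      (p - p') • J' = (q' - q) • (LinearMap.id : W →ₗ[ℝ] W) := by
  have hinj := Φ.injective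
  have key : ∀ X : V, (p - p') • (J X) = (q' - q) • X := by
    intro X
    have h2 : J (J X) = p • J X + q • X := by
      have := LinearMap.ext_iff.mp hJ X
      simpa using this
    have h3 : J' (J' (Φ X)) = p' • J' (Φ X) + q' • Φ X := by
      have := LinearMap.ext_iff.mp hJ' (Φ X)
      simpa using this
    have h4 : Φ (J (J X)) = J' (J' (Φ X)) := by rw [hΦJ, hΦJ]
    have h5 : p • J' (Φ X) + q • Φ X = p' • J' (Φ X) + q' • Φ X := by
      have := h4
      rw [h2, h3, map_add, map_smul, map_smul, hΦJ] at this
      exact this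
    have h6 : Φ ((p - p') • J X) = Φ ((q' - q) • X) := by
      rw [map_smul, map_smul, hΦJ]
      linear_combination (norm := module) h5
    exact hinj h6
  constructor
  · ext X
    simpa using key X
  · ext Y
    obtain ⟨X, rfl⟩ := hΦsurj Y
    have := congrArg Φ (key X)
    rw [map_smul, map_smul, hΦJ] at this
    simpa using this
end

section
/- Let V and W be nonzero real inner product spaces, let J be a metallic structure on V with parameters p, q ∈ ℝ symmetric with respect to the inner product of V, and let J̄ be a metallic structure on W with parameters p̄, q̄ ∈ ℝ symmetric with respect to the inner product of W. Let Φ : V → W be a surjective linear isometry satisfying Φ ∘ J = J̄ ∘ Φ. Then either (p = p̄ and q = q̄), or p ≠ p̄ and both metallic structures are trivial, namely J = ((q̄ - q)/(p - p̄))•id_V and J̄ = ((q̄ - q)/(p - p̄))•id_W. -/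
open RealInnerProductSpace

/-- Let `V`, `W` be nonzero real inner product spaces, `J` a metallic
structure on `V` with parameters `p, q` symmetric w.r.t. the inner product of `V`, and `J̄`
a metallic structure on `W` with parameters `p̄, q̄` symmetric w.r.t. the inner product of
`W`.  Let `Φ : V → W` be a surjective linear isometry with `Φ ∘ J = J̄ ∘ Φ`.
Then either `p = p̄` and `q = q̄`, or `p ≠ p̄` and both metallic structures are trivial,
namely `J = ((q̄ - q)/(p - p̄)) • id_V` and `J̄ = ((q̄ - q)/(p - p̄)) • id_W`. -/
theorem metallic_isometry_same_parameters_or_trivial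
    (V W : Type*) [NormedAddCommGroup V] [InnerProductSpace ℝ V]
    [NormedAddCommGroup W] [InnerProductSpace ℝ W]
    [Nontrivial V] [Nontrivial W]
    (p q : ℝ) (J : V →ₗ[ℝ] V)
    (hJ : J ∘ₗ J = p • J + q • (LinearMap.id : V →ₗ[ℝ] V))
    (hJsymm : ∀ X Y : V, ⟪J X, Y⟫ = ⟪X, J Y⟫)
    (p' q' : ℝ) (J' : W →ₗ[ℝ] W)
    (hJ' : J' ∘ₗ J' = p' • J' + q' • (LinearMap.id : W →ₗ[ℝ] W))
    (hJ'symm : ∀ X Y : W, ⟪J' X, Y⟫ = ⟪X, J' Y⟫)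
    (Φ : V →ₗᵢ[ℝ] W) (hΦsurj : Function.Surjective Φ)
    (hΦJ : ∀ X : V, Φ (J X) = J' (Φ X)) :
    (p = p' ∧ q = q') ∨
      (p ≠ p' ∧ J = ((q' - q) / (p - p')) • (LinearMap.id : V →ₗ[ℝ] V) ∧
        J' = ((q' - q) / (p - p')) • (LinearMap.id : W →ₗ[ℝ] W)) := by
  -- Key identity: (p - p') • J' X = (q' - q) • X for all X in W.
  have key : ∀ X : V, (p - p') • J' (Φ X) = (q' - q) • (Φ X) := by
    intro X
    have h1 : J' (J' (Φ X)) = p' • J' (Φ X) + q' • (Φ X) := by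
      have := congrArg (fun f : W →ₗ[ℝ] W => f (Φ X)) hJ'
      simpa using this
    have h2 : J' (J' (Φ X)) = p • J' (Φ X) + q • (Φ X) := by
      have hJJ : J (J X) = p • J X + q • X := by
        have := congrArg (fun f : V →ₗ[ℝ] V => f X) hJ
        simpa using this
      calc J' (J' (Φ X)) = Φ (J (J X)) := by rw [← hΦJ, ← hΦJ]
        _ = p • J' (Φ X) + q • (Φ X) := by
            rw [hJJ]; simp [hΦJ]
    have := h1.symm.trans h2
    rw [sub_smul, sub_smul]
    linear_combination (norm := module) this.symm
  have keyW : ∀ Y : W, (p - p') • J' Y = (q' - q) • Y := by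
    intro Y
    obtain ⟨X, rfl⟩ := hΦsurj Y
    exact key X
  by_cases hpp : p = p'
  · left
    refine ⟨hpp, ?_⟩
    obtain ⟨Y, hY⟩ := exists_ne (0 : W)
    have := keyW Y
    rw [hpp, sub_self, zero_smul] at this
    have hq : q' - q = 0 := by
      by_contra h
      exact hY (by simpa [h] using (smul_eq_zero.mp this.symm).resolve_left h)
    linarith [sub_eq_zero.mp hq]
  · right
    have hne : p - p' ≠ 0 := sub_ne_zero.mpr hpp
    have hJ'eq : J' = ((q' - q) / (p - p')) • (LinearMap.id : W →ₗ[ℝ] W) := by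
      ext Y
      have := keyW Y
      simp only [LinearMap.smul_apply, LinearMap.id_apply]
      rw [div_eq_inv_mul, mul_smul, ← this, smul_smul, inv_mul_cancel₀ hne, one_smul]
    refine ⟨hpp, ?_, hJ'eq⟩
    ext X
    apply Φ.injective
    rw [hΦJ, hJ'eq]
    simp [Φ.map_smul]
end

section
/- Let V be a real inner product space and let J be a metallic structure on V with parameters p, q ∈ ℝ that is symmetric with respect to the inner product (⟨J X, Y⟩ = ⟨X, J Y⟩ for all X, Y). Define the endomorphism Ĵ of V × V* (where V* is the dual space of V) by Ĵ(X, α) := (J X, ♭(X) + p•α - α ∘ J), where ♭ : V → V* is the map ♭(X) = ⟨X, ·⟩. Then Ĵ is a metallic structure on V × V* with the same parameters, i.e. Ĵ ∘ Ĵ = p•Ĵ + q•id. -/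
open RealInnerProductSpace

/-! In block form `Ĵ = [[J, 0], [♭, p - J*]]` is lower triangular. The diagonal blocks of
`Ĵ² - p Ĵ - q` are `J² - p J - q` and `(p - J*)² - p (p - J*) - q = (J² - p J - q)*`, both zero,
and the off-diagonal block is `♭ J + (p - J*) ♭ - p ♭ = ♭ J - J* ♭`, which vanishes precisely
because `J` is symmetric. -/

/-- The musical isomorphism `♭ : V → V*`, `♭(X) = ⟨X, ·⟩`, of a real inner product space. -/
noncomputable def flatMap (V : Type*) [NormedAddCommGroup V] [InnerProductSpace ℝ V] :
    V →ₗ[ℝ] Module.Dual ℝ V :=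
  innerₗ V

/-- The generalized metallic structure `Ĵ` on `V × V*` induced by `(J, ⟨·,·⟩)`:
`Ĵ(X, α) = (J X, ♭(X) + p • α - α ∘ J)`. -/
noncomputable def genMetallic (V : Type*) [NormedAddCommGroup V] [InnerProductSpace ℝ V]
    (J : V →ₗ[ℝ] V) (p : ℝ) :
    (V × Module.Dual ℝ V) →ₗ[ℝ] (V × Module.Dual ℝ V) where
  toFun Xα := (J Xα.1, flatMap V Xα.1 + p • Xα.2 - Xα.2 ∘ₗ J)
  map_add' x y := by
    refine Prod.ext (by simp) ?_
    simp only [Prod.fst_add, Prod.snd_add, map_add, smul_add, LinearMap.add_comp]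
    abel
  map_smul' c x := by
    refine Prod.ext (by simp) ?_
    simp only [Prod.smul_fst, Prod.smul_snd, map_smul, LinearMap.smul_comp,
      RingHom.id_apply, smul_sub, smul_add]
    rw [smul_comm c p]

section LowerTriangular

variable {R M N : Type*} [CommRing R] [AddCommGroup M] [Module R M] [AddCommGroup N] [Module R N]

def IsMetallic (J : M →ₗ[R] M) (p q : R) : Prop :=
  J ∘ₗ J = p • J + q • LinearMap.id

/-- The block endomorphism `[[A, 0], [B, D]]` of `M × N`. -/
def lowerTriangular (A : M →ₗ[R] M) (B : M →ₗ[R] N) (D : N →ₗ[R] N) : M × N →ₗ[R] M × N :=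
  (A ∘ₗ LinearMap.fst R M N).prod (B ∘ₗ LinearMap.fst R M N + D ∘ₗ LinearMap.snd R M N)

@[simp]
theorem lowerTriangular_apply (A : M →ₗ[R] M) (B : M →ₗ[R] N) (D : N →ₗ[R] N) (x : M) (y : N) :
    lowerTriangular A B D (x, y) = (A x, B x + D y) :=
  rfl

theorem lowerTriangular_comp_lowerTriangular (A A' : M →ₗ[R] M) (B B' : M →ₗ[R] N)
    (D D' : N →ₗ[R] N) :
    lowerTriangular A' B' D' ∘ₗ lowerTriangular A B D =
      lowerTriangular (A' ∘ₗ A) (B' ∘ₗ A + D' ∘ₗ B) (D' ∘ₗ D) := by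
  refine LinearMap.ext fun ⟨x, y⟩ => ?_
  simp [add_assoc]

theorem smul_lowerTriangular_add_smul_id (A : M →ₗ[R] M) (B : M →ₗ[R] N) (D : N →ₗ[R] N)
    (p q : R) :
    p • lowerTriangular A B D + q • (LinearMap.id : M × N →ₗ[R] M × N) =
      lowerTriangular (p • A + q • LinearMap.id) (p • B) (p • D + q • LinearMap.id) := by
  refine LinearMap.ext fun ⟨x, y⟩ => ?_
  simp [smul_add, add_assoc]

namespace IsMetallic

variable {J : M →ₗ[R] M} {p q : R}

theorem lowerTriangular {A : M →ₗ[R] M} {B : M →ₗ[R] N} {D : N →ₗ[R] N}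
    (hA : IsMetallic A p q) (hD : IsMetallic D p q) (hB : B ∘ₗ A + D ∘ₗ B = p • B) :
    IsMetallic (lowerTriangular A B D) p q := by
  rw [IsMetallic, lowerTriangular_comp_lowerTriangular, smul_lowerTriangular_add_smul_id,
    hA, hD, hB]

theorem apply_apply (hJ : IsMetallic J p q) (x : M) : J (J x) = p • J x + q • x := by
  simpa using LinearMap.congr_fun hJ x

theorem smul_id_sub (hJ : IsMetallic J p q) : IsMetallic (p • LinearMap.id - J) p q := by
  ext x
  simp only [LinearMap.comp_apply, LinearMap.sub_apply, LinearMap.smul_apply, LinearMap.id_apply,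
    LinearMap.add_apply, map_sub, map_smul, hJ.apply_apply]
  module

theorem dualMap (hJ : IsMetallic J p q) : IsMetallic J.dualMap p q := by
  ext α x
  simp [LinearMap.dualMap_apply, hJ.apply_apply]

end IsMetallic

end LowerTriangular

theorem flatMap_comp_of_symm {V : Type*} [NormedAddCommGroup V] [InnerProductSpace ℝ V]
    {J : V →ₗ[ℝ] V} (hJsymm : ∀ X Y : V, ⟪J X, Y⟫ = ⟪X, J Y⟫) :
    flatMap V ∘ₗ J = J.dualMap ∘ₗ flatMap V := by
  ext X Y
  exact hJsymm X Y

theorem genMetallic_eq_lowerTriangular (V : Type*) [NormedAddCommGroup V]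
    [InnerProductSpace ℝ V] (J : V →ₗ[ℝ] V) (p : ℝ) :
    genMetallic V J p = lowerTriangular J (flatMap V) (p • LinearMap.id - J.dualMap) := by
  refine LinearMap.ext fun ⟨X, α⟩ => ?_
  simp [genMetallic, LinearMap.dualMap_apply', add_sub_assoc]

/-- Let `V` be a real inner product space and `J` a metallic structure on
`V` with parameters `p, q` (i.e. `J ∘ J = p • J + q • id`) symmetric with respect to the
inner product.  Then `Ĵ(X, α) := (J X, ♭(X) + p • α - α ∘ J)` is a metallic structure on
`V × V*` with the same parameters: `Ĵ ∘ Ĵ = p • Ĵ + q • id`. -/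
theorem genMetallic_is_metallic
    (V : Type*) [NormedAddCommGroup V] [InnerProductSpace ℝ V]
    (p q : ℝ) (J : V →ₗ[ℝ] V)
    (hJ : J ∘ₗ J = p • J + q • (LinearMap.id : V →ₗ[ℝ] V))
    (hJsymm : ∀ X Y : V, ⟪J X, Y⟫ = ⟪X, J Y⟫) :
    genMetallic V J p ∘ₗ genMetallic V J p =
      p • genMetallic V J p +
        q • (LinearMap.id : (V × Module.Dual ℝ V) →ₗ[ℝ] (V × Module.Dual ℝ V)) := by
  have hJ' : IsMetallic J p q := hJ
  rw [genMetallic_eq_lowerTriangular]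
  refine hJ'.lowerTriangular hJ'.dualMap.smul_id_sub ?_
  rw [LinearMap.sub_comp, LinearMap.smul_comp, LinearMap.id_comp, flatMap_comp_of_symm hJsymm]
  abel
end

section
/- Let V and W be real inner product spaces, let J be a linear endomorphism of V and J̄ a linear endomorphism of W, and let Φ : V → W be a bijective linear isometry satisfying Φ ∘ J = J̄ ∘ Φ. Fix p ∈ ℝ and define Ĵ on V × V* by Ĵ(X, α) := (J X, ♭_V(X) + p•α - α ∘ J) and Ĵ̄ on W × W* by Ĵ̄(Y, β) := (J̄ Y, ♭_W(Y) + p•β - β ∘ J̄), where ♭_V(X) = ⟨X, ·⟩_V and ♭_W(Y) = ⟨Y, ·⟩_W. Define Φ̂ : V × V* → W × W* by Φ̂(X, α) := (Φ X, α ∘ Φ⁻¹). Then Ĵ̄ ∘ Φ̂ = Φ̂ ∘ Ĵ. -/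
open RealInnerProductSpace

/-- The map `Φ̂ : V × V* → W × W*`, `Φ̂(X, α) = (Φ X, α ∘ Φ⁻¹)`, induced by a bijective
linear isometry `Φ : V → W`. -/
noncomputable def hatPhi (V W : Type*) [NormedAddCommGroup V] [InnerProductSpace ℝ V]
    [NormedAddCommGroup W] [InnerProductSpace ℝ W] (Φ : V ≃ₗᵢ[ℝ] W) :
    V × Module.Dual ℝ V → W × Module.Dual ℝ W :=
  fun Xα => (Φ Xα.1, Xα.2 ∘ₗ Φ.symm.toLinearEquiv.toLinearMap)

/-- Let `V`, `W` be real inner product spaces, `J`, `J̄` linear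
endomorphisms of `V`, `W` respectively, and `Φ : V → W` a bijective linear isometry with
`Φ ∘ J = J̄ ∘ Φ`.  Fix `p ∈ ℝ`, let `Ĵ`, `Ĵ̄` be the induced generalized structures on
`V × V*`, `W × W*`, and let `Φ̂(X, α) := (Φ X, α ∘ Φ⁻¹)`.  Then `Ĵ̄ ∘ Φ̂ = Φ̂ ∘ Ĵ`. -/
theorem genMetallic_commutes_with_hatPhi
    (V W : Type*) [NormedAddCommGroup V] [InnerProductSpace ℝ V]
    [NormedAddCommGroup W] [InnerProductSpace ℝ W]
    (J : V →ₗ[ℝ] V) (J' : W →ₗ[ℝ] W)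
    (Φ : V ≃ₗᵢ[ℝ] W) (hΦJ : ∀ X : V, Φ (J X) = J' (Φ X)) (p : ℝ) :
    (genMetallic W J' p : W × Module.Dual ℝ W → W × Module.Dual ℝ W) ∘ hatPhi V W Φ =
      hatPhi V W Φ ∘ (genMetallic V J p : V × Module.Dual ℝ V → V × Module.Dual ℝ V) := by
  funext Xα
  obtain ⟨X, α⟩ := Xα
  refine Prod.ext ?_ ?_
  · simpa [genMetallic, hatPhi] using (hΦJ X).symm
  · apply LinearMap.ext
    intro w
    have hinv : Φ.symm (J' w) = J (Φ.symm w) := by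
      have := hΦJ (Φ.symm w)
      rw [Φ.apply_symm_apply] at this
      exact Φ.symm_apply_eq.mpr this.symm
    simp [genMetallic, hatPhi, flatMap, innerₗ, hinv]
    conv_lhs => rw [← Φ.apply_symm_apply w]
    exact Φ.inner_map_map X (Φ.symm w)
end
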